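/- arXiv:1505.05385 — 4 statements merged into one kernel-verified Lean document; each statement's English description precedes it below -/
import Mathlib

section
/- (Breiman's lemma) Let σ ≥ 0 be a random variable with P(σ > x) ~ c₀ x^{−α} as x → ∞ for some c₀ > 0 and α > 0, and let Z be a random variable independent of σ with E[(Z⁺)^{α+ε}] < ∞ for some ε > 0 and P(Z > 0) > 0. Then P(σ Z > x) / P(σ > x) → E[(Z⁺)^α] as x → ∞. -/
/-!
By independence, `P(σZ > x) = ∫_{z > 0} P(σ > x/z) dP_Z(z)`. Since
`(x/z)^(-α) = x^(-α) z^α`, after division by `c₀ x^(-α)` the integrand tends to `z^α` for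
every `z > 0`. It is dominated by a multiple of `z^α`: beyond a threshold `x₀` the tail is at
most `2 c₀ y^(-α)`, which bounds the ratio by `2 z^α` when `x/z ≥ x₀`; otherwise `x < x₀ z`,
and the trivial bound `P(σ > x/z) ≤ 1` bounds it by `x₀^α z^α / c₀`. Because the tail is
exactly a power law, no Potter bounds are needed, and dominated convergence applies as soon
as `E[(Z⁺)^α] < ∞`.
-/

open MeasureTheory ProbabilityTheory Filter Set Topology

lemma Real.rpow_le_rpow_add_one {z p q : ℝ} (hz : 0 ≤ z) (hq : 0 ≤ q) (hqp : q ≤ p) :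
    z ^ q ≤ z ^ p + 1 := by
  rcases le_total 1 z with h1 | h1
  · linarith [Real.rpow_le_rpow_of_exponent_le h1 hqp]
  · linarith [Real.rpow_le_one hz h1 hq, Real.rpow_nonneg hz p]

lemma MeasureTheory.Integrable.rpow_of_le {α : Type*} [MeasurableSpace α] {μ : Measure α}
    [IsFiniteMeasure μ] {f : α → ℝ} {p q : ℝ} (hf : AEMeasurable f μ)
    (hf0 : ∀ a, 0 ≤ f a) (hp : Integrable (fun a => f a ^ p) μ) (hq : 0 ≤ q) (hqp : q ≤ p) :
    Integrable (fun a => f a ^ q) μ :=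
  (hp.add (integrable_const 1)).mono' (hf.pow_const q).aestronglyMeasurable <|
    Eventually.of_forall fun a => by
      rw [Real.norm_of_nonneg (Real.rpow_nonneg (hf0 a) q)]
      exact Real.rpow_le_rpow_add_one (hf0 a) hq hqp

lemma Real.div_rpow_neg {x z : ℝ} (hx : 0 ≤ x) (hz : 0 ≤ z) (α : ℝ) :
    (x / z) ^ (-α) = x ^ (-α) * z ^ α := by
  rw [Real.div_rpow hx hz, Real.rpow_neg hz, div_inv_eq_mul]

section LawOfZ

variable {Ω : Type*} [MeasurableSpace Ω] {μ : Measure Ω} {Z : Ω → ℝ}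

lemma integrableOn_Ioi_rpow_map {α : ℝ} (hZ : AEMeasurable Z μ)
    (h : Integrable (fun ω => max (Z ω) 0 ^ α) μ) :
    IntegrableOn (fun z : ℝ => z ^ α) (Ioi 0) (μ.map Z) := by
  have hmax : Integrable (fun z : ℝ => max z 0 ^ α) (μ.map Z) :=
    (integrable_map_measure
      (by fun_prop : Measurable fun z : ℝ => max z 0 ^ α).aestronglyMeasurable hZ).2 h
  exact hmax.integrableOn.congr_fun (fun z (hz : 0 < z) => by simp [hz.le]) measurableSet_Ioi

lemma setIntegral_Ioi_rpow_map {α : ℝ} (hZ : AEMeasurable Z μ) (hα : α ≠ 0) :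
    ∫ z in Ioi (0 : ℝ), z ^ α ∂(μ.map Z) = ∫ ω, max (Z ω) 0 ^ α ∂μ := by
  have hcompl : ∀ z ∉ Ioi (0 : ℝ), max z 0 ^ α = 0 := fun z hz => by
    rw [max_eq_right (not_lt.1 hz), Real.zero_rpow hα]
  rw [← integral_map hZ
      (by fun_prop : Measurable fun z : ℝ => max z 0 ^ α).aestronglyMeasurable,
    ← setIntegral_eq_integral_of_forall_compl_eq_zero hcompl]
  exact setIntegral_congr_fun measurableSet_Ioi fun z (hz : 0 < z) => by rw [max_eq_left hz.le]

end LawOfZ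

section PowerTail

variable {g : ℝ → ℝ} {c₀ α : ℝ}

lemma apply_div_div_le_max_mul_rpow {C x₀ x z : ℝ} (hc₀ : 0 < c₀) (hα : 0 ≤ α)
    (hx₀ : 0 < x₀) (hg1 : ∀ y, g y ≤ 1) (hgC : ∀ y, x₀ ≤ y → g y ≤ C * (c₀ * y ^ (-α)))
    (hx : x₀ ≤ x) (hz : 0 < z) :
    g (x / z) / (c₀ * x ^ (-α)) ≤ max C (x₀ ^ α / c₀) * z ^ α := by
  have hx0 : 0 < x := hx₀.trans_le hx
  have hr : 0 < c₀ * x ^ (-α) := by positivity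
  rw [div_le_iff₀ hr]
  rcases le_or_gt x₀ (x / z) with hxz | hxz
  · calc g (x / z) ≤ C * (c₀ * (x / z) ^ (-α)) := hgC _ hxz
      _ = C * z ^ α * (c₀ * x ^ (-α)) := by rw [Real.div_rpow_neg hx0.le hz.le]; ring
      _ ≤ max C (x₀ ^ α / c₀) * z ^ α * (c₀ * x ^ (-α)) := by
          gcongr; apply le_max_left
  · have hlt : x ^ α ≤ x₀ ^ α * z ^ α := by
      rw [← Real.mul_rpow hx₀.le hz.le]
      exact Real.rpow_le_rpow hx0.le ((div_lt_iff₀ hz).1 hxz).le hα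
    calc g (x / z) ≤ 1 := hg1 _
      _ = x ^ α / c₀ * (c₀ * x ^ (-α)) := by
          rw [Real.rpow_neg hx0.le]; field_simp
      _ ≤ x₀ ^ α / c₀ * z ^ α * (c₀ * x ^ (-α)) := by
          gcongr; rw [div_mul_eq_mul_div]; gcongr
      _ ≤ max C (x₀ ^ α / c₀) * z ^ α * (c₀ * x ^ (-α)) := by
          gcongr; apply le_max_right

theorem tendsto_setIntegral_Ioi_div_rpow_neg {ν : Measure ℝ} (hc₀ : 0 < c₀) (hα : 0 ≤ α)
    (hg : Measurable g) (hg0 : ∀ y, 0 ≤ g y) (hg1 : ∀ y, g y ≤ 1)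
    (htail : Tendsto (fun x => g x / (c₀ * x ^ (-α))) atTop (𝓝 1))
    (hint : IntegrableOn (fun z => z ^ α) (Ioi 0) ν) :
    Tendsto (fun x => (∫ z in Ioi 0, g (x / z) ∂ν) / (c₀ * x ^ (-α))) atTop
      (𝓝 (∫ z in Ioi 0, z ^ α ∂ν)) := by
  obtain ⟨x₀, hx₀⟩ := ((htail.eventually_le_const one_lt_two).and
    (eventually_gt_atTop 0)).exists_forall_of_atTop
  have hx₀pos : 0 < x₀ := (hx₀ x₀ le_rfl).2
  have hg2 : ∀ y, x₀ ≤ y → g y ≤ 2 * (c₀ * y ^ (-α)) := fun y hy => by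
    have hy0 : 0 < y := (hx₀ y hy).2
    exact (div_le_iff₀ (by positivity)).1 (hx₀ y hy).1
  simp_rw [← integral_div]
  refine tendsto_integral_filter_of_dominated_convergence
    (fun z => max 2 (x₀ ^ α / c₀) * z ^ α) ?_ ?_ (hint.const_mul _) ?_
  · exact Eventually.of_forall fun x =>
      ((hg.comp (measurable_const.div measurable_id)).div_const _).aestronglyMeasurable
  · filter_upwards [eventually_ge_atTop x₀] with x hx
    refine (ae_restrict_iff' measurableSet_Ioi).2 <| Eventually.of_forall fun z (hz : 0 < z) => ?_
    have hx0 : 0 < x := hx₀pos.trans_le hx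
    rw [Real.norm_of_nonneg (div_nonneg (hg0 _) (by positivity))]
    exact apply_div_div_le_max_mul_rpow hc₀ hα hx₀pos hg1 hg2 hx hz
  · refine (ae_restrict_iff' measurableSet_Ioi).2 <| Eventually.of_forall fun z (hz : 0 < z) => ?_
    have hlim := (htail.comp (tendsto_id.atTop_div_const hz)).mul_const (z ^ α)
    rw [one_mul] at hlim
    refine hlim.congr' ?_
    filter_upwards [eventually_gt_atTop 0] with x hx
    simp only [Function.comp_apply, id, Real.div_rpow_neg hx.le hz.le]
    field_simp

end PowerTail

section Independence

variable {Ω : Type*} [MeasurableSpace Ω] {μ : Measure Ω} {σ Z : Ω → ℝ}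

lemma antitone_measure_setOf_gt : Antitone fun y => μ {ω | σ ω > y} := fun _ _ h =>
  measure_mono fun _ hω => h.trans_lt hω

variable [IsFiniteMeasure μ]

lemma measure_mul_gt_eq_lintegral (hσ : Measurable σ) (hZ : Measurable Z)
    (hσ0 : ∀ ω, 0 ≤ σ ω) (hind : IndepFun σ Z μ) {x : ℝ} (hx : 0 < x) :
    μ {ω | σ ω * Z ω > x} = ∫⁻ z in Ioi 0, μ {ω | σ ω > x / z} ∂(μ.map Z) := by
  have hset : MeasurableSet {p : ℝ × ℝ | p.1 * p.2 > x} :=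
    measurableSet_lt measurable_const (measurable_fst.mul measurable_snd)
  have hsection : ∀ z, μ.map σ ((fun s => (s, z)) ⁻¹' {p : ℝ × ℝ | p.1 * p.2 > x})
      = (Ioi 0).indicator (fun z => μ {ω | σ ω > x / z}) z := by
    intro z
    rcases le_or_gt z 0 with hz | hz
    · rw [indicator_of_notMem (notMem_Ioi.2 hz),
        Measure.map_apply hσ (hset.preimage (by fun_prop))]
      refine measure_mono_null (fun ω (hω : σ ω * z > x) => ?_) measure_empty
      nlinarith [hσ0 ω]
    · rw [indicator_of_mem (mem_Ioi.2 hz), Measure.map_apply hσ (hset.preimage (by fun_prop))]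
      congr 1
      ext ω
      simp [div_lt_iff₀ hz]
  calc μ {ω | σ ω * Z ω > x}
      = (μ.map fun ω => (σ ω, Z ω)) {p : ℝ × ℝ | p.1 * p.2 > x} :=
        (Measure.map_apply (hσ.prodMk hZ) hset).symm
    _ = ∫⁻ z, μ.map σ ((fun s => (s, z)) ⁻¹' {p : ℝ × ℝ | p.1 * p.2 > x}) ∂(μ.map Z) := by
        rw [(indepFun_iff_map_prod_eq_prod_map_map hσ.aemeasurable hZ.aemeasurable).1 hind,
          Measure.prod_apply_symm hset]
    _ = ∫⁻ z in Ioi 0, μ {ω | σ ω > x / z} ∂(μ.map Z) := by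
        rw [lintegral_congr hsection, lintegral_indicator measurableSet_Ioi]

lemma measure_mul_gt_toReal_eq_setIntegral (hσ : Measurable σ) (hZ : Measurable Z)
    (hσ0 : ∀ ω, 0 ≤ σ ω) (hind : IndepFun σ Z μ) {x : ℝ} (hx : 0 < x) :
    (μ {ω | σ ω * Z ω > x}).toReal
      = ∫ z in Ioi 0, (μ {ω | σ ω > x / z}).toReal ∂(μ.map Z) := by
  rw [measure_mul_gt_eq_lintegral hσ hZ hσ0 hind hx, integral_toReal]
  · exact (antitone_measure_setOf_gt.measurable.comp
      (measurable_const.div measurable_id)).aemeasurable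
  · exact Eventually.of_forall fun z => measure_lt_top μ _

end Independence

theorem stmt4_general {Ω : Type*} [MeasurableSpace Ω] (μ : Measure Ω) [IsProbabilityMeasure μ]
    (σ Z : Ω → ℝ) (hσmeas : Measurable σ) (hZmeas : Measurable Z)
    (hσnonneg : ∀ ω, 0 ≤ σ ω)
    (hindep : IndepFun σ Z μ)
    (c₀ α : ℝ) (hc₀ : 0 < c₀) (hα : 0 < α)
    (htail : Tendsto (fun x : ℝ =>
      (μ {ω | σ ω > x}).toReal / (c₀ * x ^ (-α))) atTop (nhds 1))
    (ε : ℝ) (hε : 0 < ε)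
    (hmom : Integrable (fun ω => (max (Z ω) 0) ^ (α + ε)) μ) :
    Tendsto (fun x : ℝ =>
        (μ {ω | σ ω * Z ω > x}).toReal / (μ {ω | σ ω > x}).toReal)
      atTop (nhds (∫ ω, (max (Z ω) 0) ^ α ∂μ)) := by
  set g : ℝ → ℝ := fun y => (μ {ω | σ ω > y}).toReal
  have hg : Antitone g := fun _ _ h =>
    ENNReal.toReal_mono (measure_ne_top μ _) (antitone_measure_setOf_gt h)
  have hmomα : Integrable (fun ω => max (Z ω) 0 ^ α) μ :=
    hmom.rpow_of_le (by fun_prop) (fun ω => le_max_right _ _) hα.le (by linarith)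
  have hnum : Tendsto (fun x => (μ {ω | σ ω * Z ω > x}).toReal / (c₀ * x ^ (-α))) atTop
      (𝓝 (∫ ω, max (Z ω) 0 ^ α ∂μ)) := by
    rw [← setIntegral_Ioi_rpow_map hZmeas.aemeasurable hα.ne']
    refine (tendsto_setIntegral_Ioi_div_rpow_neg hc₀ hα.le hg.measurable
      (fun _ => ENNReal.toReal_nonneg) (fun _ => measureReal_le_one) htail
      (integrableOn_Ioi_rpow_map hZmeas.aemeasurable hmomα)).congr' ?_
    filter_upwards [eventually_gt_atTop 0] with x hx
    rw [measure_mul_gt_toReal_eq_setIntegral hσmeas hZmeas hσnonneg hindep hx]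
  have hden : Tendsto (fun x => c₀ * x ^ (-α) / g x) atTop (𝓝 1) := by
    simpa using htail.inv₀ one_ne_zero
  have hlim := hnum.mul hden
  rw [mul_one] at hlim
  refine hlim.congr' ?_
  filter_upwards [eventually_gt_atTop 0] with x hx
  exact div_mul_div_cancel₀ (by positivity)

/-- Breiman's lemma: if `P(σ > x) ~ c₀ x^(−α)` as `x → ∞`, `Z` is independent of `σ`
with `E[(Z⁺)^(α+ε)] < ∞` for some `ε > 0` and `P(Z > 0) > 0`, then
`P(σZ > x)/P(σ > x) → E[(Z⁺)^α]`. -/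
theorem stmt4 {Ω : Type*} [MeasurableSpace Ω] (μ : Measure Ω) [IsProbabilityMeasure μ]
    (σ Z : Ω → ℝ) (hσmeas : Measurable σ) (hZmeas : Measurable Z)
    (hσnonneg : ∀ ω, 0 ≤ σ ω)
    (hindep : IndepFun σ Z μ)
    (c₀ α : ℝ) (hc₀ : 0 < c₀) (hα : 0 < α)
    (htail : Tendsto (fun x : ℝ =>
      (μ {ω | σ ω > x}).toReal / (c₀ * x ^ (-α))) atTop (nhds 1))
    (ε : ℝ) (hε : 0 < ε)
    (hmom : Integrable (fun ω => (max (Z ω) 0) ^ (α + ε)) μ)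
    (hZpos : 0 < (μ {ω | 0 < Z ω}).toReal) :
    Tendsto (fun x : ℝ =>
        (μ {ω | σ ω * Z ω > x}).toReal / (μ {ω | σ ω > x}).toReal)
      atTop (nhds (∫ ω, (max (Z ω) 0) ^ α ∂μ)) :=
  stmt4_general μ σ Z hσmeas hZmeas hσnonneg hindep c₀ α hc₀ hα htail ε hε hmom
end

section
/- Let σ ≥ 0 satisfy P(σ > x) ~ c₀ x^{−α} as x → ∞ with c₀ > 0, α > 0, and let Z be independent of σ with E[|Z|^{α+ε}] < ∞ for some ε > 0, P(Z > 0) > 0 and P(Z < 0) > 0. Then P(σZ > x) ~ E[(Z⁺)^α] P(σ > x) and P(σZ ≤ −x) ~ E[(Z⁻)^α] P(σ > x) as x → ∞, where Z⁻ = max(−Z, 0). -/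
/-! By independence, for `x > 0` we have `P(σZ > x) = ∫_{z > 0} F (x / z) dP_Z(z)` with
`F t = P(σ > t)`. The power tail gives `F (x / z) / F x → z ^ α` for each `z > 0`, and the
global bound `F t ≤ K t^(-α)` gives the domination `F (x / z) ≤ C z ^ α F x` for large `x`,
uniformly in `z`; `E[(Z⁺)^α] < ∞` by the `(α + ε)`-moment, so dominated convergence applies.
The left tail is the right tail of `σ(-Z)` with `≥` in place of `>`, squeezed between the strict
tails at `x` and `x - 1`, which are asymptotically equivalent. -/

open MeasureTheory ProbabilityTheory Filter Set Topology

def HasPowerTail (F : ℝ → ℝ) (c α : ℝ) : Prop :=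
  Tendsto (fun x => F x / (c * x ^ (-α))) atTop (𝓝 1)

namespace HasPowerTail

variable {F : ℝ → ℝ} {c α : ℝ}

lemma eventually_pos (hc : 0 < c) (hF : HasPowerTail F c α) : ∀ᶠ x in atTop, 0 < F x := by
  filter_upwards [hF.eventually (lt_mem_nhds zero_lt_one), eventually_gt_atTop 0] with x hx hx0
  exact (div_pos_iff_of_pos_right (by positivity)).mp hx

lemma tendsto_comp_div (hc : 0 < c) (hF : HasPowerTail F c α) {φ : ℝ → ℝ}
    (hφ : Tendsto φ atTop atTop) {r : ℝ} (hr : 0 < r)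
    (hφr : Tendsto (fun x => φ x / x) atTop (𝓝 r)) :
    Tendsto (fun x => F (φ x) / F x) atTop (𝓝 (r ^ (-α))) := by
  have hpow : Tendsto (fun x => (φ x / x) ^ (-α)) atTop (𝓝 (r ^ (-α))) :=
    (Real.continuousAt_rpow_const r (-α) (Or.inl hr.ne')).tendsto.comp hφr
  have h := ((hF.comp hφ).mul (by simpa using hF.inv₀ one_ne_zero)).mul hpow
  rw [one_mul, one_mul] at h
  refine h.congr' ?_
  filter_upwards [hF.eventually_pos hc, eventually_gt_atTop 0, hφ.eventually_gt_atTop 0]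
    with x hFx hx hφx
  rw [Function.comp_apply, Real.div_rpow hφx.le hx.le]
  have : 0 < φ x ^ (-α) := by positivity
  have : 0 < x ^ (-α) := by positivity
  field_simp

lemma tendsto_comp_div_const (hc : 0 < c) (hF : HasPowerTail F c α) {w : ℝ} (hw : 0 < w) :
    Tendsto (fun x => F (x / w) / F x) atTop (𝓝 (w ^ α)) := by
  have hlim : Tendsto (fun x : ℝ => x / w / x) atTop (𝓝 w⁻¹) :=
    tendsto_const_nhds.congr' <| by
      filter_upwards [eventually_ne_atTop 0] with x hx
      field_simp
  simpa [Real.inv_rpow hw.le, Real.rpow_neg hw.le] using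
    hF.tendsto_comp_div hc (tendsto_id.atTop_div_const hw) (inv_pos.mpr hw) hlim

lemma tendsto_comp_sub_one (hc : 0 < c) (hF : HasPowerTail F c α) :
    Tendsto (fun x => F (x - 1) / F x) atTop (𝓝 1) := by
  have hlim : Tendsto (fun x : ℝ => (x - 1) / x) atTop (𝓝 1) := by
    have : Tendsto (fun x : ℝ => 1 - x⁻¹) atTop (𝓝 (1 - 0)) :=
      tendsto_const_nhds.sub tendsto_inv_atTop_zero
    refine (sub_zero (1 : ℝ) ▸ this).congr' ?_
    filter_upwards [eventually_ne_atTop 0] with x hx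
    field_simp
  have hφ : Tendsto (fun x : ℝ => x - 1) atTop atTop :=
    tendsto_atTop_add_const_right _ (-1) tendsto_id
  simpa using hF.tendsto_comp_div hc hφ one_pos hlim

lemma exists_le_mul_rpow_neg (hc : 0 < c) (hα : 0 ≤ α) (hF : HasPowerTail F c α)
    (hF1 : ∀ t, F t ≤ 1) : ∃ K, 0 ≤ K ∧ ∀ t, 0 < t → F t ≤ K * t ^ (-α) := by
  obtain ⟨x₀, hx₀⟩ := ((hF.eventually (gt_mem_nhds one_lt_two)).and
    (eventually_gt_atTop 0)).exists_forall_of_atTop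
  have hx₀pos : 0 < x₀ := (hx₀ x₀ le_rfl).2
  refine ⟨max (2 * c) (x₀ ^ α), by positivity, fun t ht => ?_⟩
  rcases le_or_gt x₀ t with hxt | htx
  · have h := (div_lt_iff₀ (by positivity)).mp (hx₀ t hxt).1
    calc F t ≤ 2 * c * t ^ (-α) := by linarith
      _ ≤ _ := by gcongr; exact le_max_left _ _
  · have h : 1 ≤ (x₀ / t) ^ α := Real.one_le_rpow ((one_le_div ht).mpr htx.le) hα
    rw [Real.div_rpow hx₀pos.le ht.le] at h
    calc F t ≤ x₀ ^ α / t ^ α := (hF1 t).trans h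
      _ ≤ _ := by rw [Real.rpow_neg ht.le, div_eq_mul_inv]; gcongr; exact le_max_right _ _

lemma exists_eventually_comp_div_le (hc : 0 < c) (hα : 0 ≤ α) (hF : HasPowerTail F c α)
    (hF1 : ∀ t, F t ≤ 1) :
    ∃ C, ∀ᶠ x in atTop, ∀ w, 0 < w → F (x / w) ≤ C * w ^ α * F x := by
  obtain ⟨K, hK, hFK⟩ := hF.exists_le_mul_rpow_neg hc hα hF1
  refine ⟨2 * K / c, ?_⟩
  filter_upwards [hF.eventually (lt_mem_nhds one_half_lt_one), eventually_gt_atTop 0]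
    with x hx hx0 w hw
  have hFx : c * x ^ (-α) ≤ 2 * F x := by
    have := (lt_div_iff₀ (by positivity)).mp hx
    linarith
  calc F (x / w) ≤ K * (x / w) ^ (-α) := hFK _ (by positivity)
    _ = K * w ^ α * x ^ (-α) := by
      rw [Real.div_rpow hx0.le hw.le, Real.rpow_neg hw.le]; field_simp
    _ ≤ K * w ^ α * (2 * F x / c) := by
      gcongr
      rw [le_div_iff₀ hc]; linarith
    _ = 2 * K / c * w ^ α * F x := by ring

theorem tendsto_integral_indicator_comp_div (hc : 0 < c) (hα : 0 < α)
    (hF : HasPowerTail F c α) (hFm : Measurable F) (hF0 : ∀ t, 0 ≤ F t) (hF1 : ∀ t, F t ≤ 1)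
    {ρ : Measure ℝ} (hint : Integrable (fun z => max z 0 ^ α) ρ) :
    Tendsto (fun x => (∫ z, (Ioi 0).indicator (fun z => F (x / z)) z ∂ρ) / F x) atTop
      (𝓝 (∫ z, max z 0 ^ α ∂ρ)) := by
  obtain ⟨C, hC⟩ := hF.exists_eventually_comp_div_le hc hα.le hF1
  simp_rw [← integral_div]
  refine tendsto_integral_filter_of_dominated_convergence (fun z => C * max z 0 ^ α)
    (Eventually.of_forall fun x => ?_) ?_ (hint.const_mul C) (ae_of_all _ fun z => ?_)
  · exact (((hFm.comp (measurable_const.div measurable_id)).indicator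
      measurableSet_Ioi).div_const _).aestronglyMeasurable
  · filter_upwards [hC, hF.eventually_pos hc] with x hCx hFx
    refine ae_of_all _ fun z => ?_
    rcases le_or_gt z 0 with hz | hz
    · have hz' : z ∉ Ioi 0 := not_lt.mpr hz
      simp [hz', max_eq_right hz, Real.zero_rpow hα.ne']
    · rw [indicator_of_mem (mem_Ioi.mpr hz), max_eq_left hz.le,
        Real.norm_of_nonneg (div_nonneg (hF0 _) hFx.le), div_le_iff₀ hFx]
      exact hCx z hz
  · rcases le_or_gt z 0 with hz | hz
    · have hz' : z ∉ Ioi 0 := not_lt.mpr hz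
      simp [hz', max_eq_right hz, Real.zero_rpow hα.ne']
    · simpa [indicator_of_mem (mem_Ioi.mpr hz), max_eq_left hz.le] using
        hF.tendsto_comp_div_const hc hz

end HasPowerTail

lemma max_rpow_le_one_add_abs_rpow {α ε : ℝ} (hα : 0 ≤ α) (hε : 0 ≤ ε) (z : ℝ) :
    max z 0 ^ α ≤ 1 + |z| ^ (α + ε) := by
  have hmax : max z 0 ^ α ≤ |z| ^ α :=
    Real.rpow_le_rpow (le_max_right _ _) (max_le (le_abs_self z) (abs_nonneg z)) hα
  rcases le_or_gt |z| 1 with hz | hz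
  · have := Real.rpow_le_one (abs_nonneg z) hz hα
    have : 0 ≤ |z| ^ (α + ε) := by positivity
    linarith
  · have : |z| ^ α ≤ |z| ^ (α + ε) :=
      Real.rpow_le_rpow_of_exponent_le hz.le (le_add_of_nonneg_right hε)
    linarith

namespace ProbabilityTheory

variable {Ω : Type*} [MeasurableSpace Ω] {μ : Measure Ω} {σ Y : Ω → ℝ} {α : ℝ}

lemma integrable_max_rpow_of_integrable_abs_rpow [IsFiniteMeasure μ] (hα : 0 ≤ α) {ε : ℝ}
    (hε : 0 ≤ ε) (hY : Measurable Y) (hmom : Integrable (fun ω => |Y ω| ^ (α + ε)) μ) :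
    Integrable (fun ω => max (Y ω) 0 ^ α) μ := by
  refine ((integrable_const 1).add hmom).mono'
    ((hY.max measurable_const).pow_const α).aestronglyMeasurable (ae_of_all _ fun ω => ?_)
  rw [Real.norm_of_nonneg (by positivity)]
  exact max_rpow_le_one_add_abs_rpow hα hε (Y ω)

lemma integral_max_rpow_pos (hint : Integrable (fun ω => max (Y ω) 0 ^ α) μ)
    (hpos : 0 < μ {ω | 0 < Y ω}) : 0 < ∫ ω, max (Y ω) 0 ^ α ∂μ := by
  refine (integral_pos_iff_support_of_nonneg (fun ω => by positivity) hint).mpr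
    (hpos.trans_le (measure_mono fun ω hω => ?_))
  exact (Real.rpow_pos_of_pos (lt_max_of_lt_left hω) α).ne'

lemma measure_mul_const_gt_of_nonneg (hσ0 : ∀ ω, 0 ≤ σ ω) {x : ℝ} (hx : 0 < x) (y : ℝ) :
    μ {ω | σ ω * y > x} = (Ioi 0).indicator (fun y => μ {ω | σ ω > x / y}) y := by
  rcases le_or_gt y 0 with hy | hy
  · have hempty : {ω | σ ω * y > x} = ∅ :=
      eq_empty_of_forall_notMem fun ω hω =>
        (mul_nonpos_of_nonneg_of_nonpos (hσ0 ω) hy).not_gt (hx.trans hω)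
    rw [hempty, measure_empty, indicator_of_notMem (show y ∉ Ioi 0 from not_lt.mpr hy)]
  · simp_rw [indicator_of_mem (mem_Ioi.mpr hy), gt_iff_lt, div_lt_iff₀ hy]

lemma IndepFun.measure_mul_gt_eq_lintegral [IsFiniteMeasure μ] (hσ : Measurable σ)
    (hY : Measurable Y) (hind : IndepFun σ Y μ) (x : ℝ) :
    μ {ω | σ ω * Y ω > x} = ∫⁻ y, μ {ω | σ ω * y > x} ∂(μ.map Y) := by
  have hA : MeasurableSet {p : ℝ × ℝ | p.1 * p.2 > x} :=
    measurableSet_lt measurable_const (measurable_fst.mul measurable_snd)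
  calc μ {ω | σ ω * Y ω > x}
      = μ.map (fun ω => (σ ω, Y ω)) {p | p.1 * p.2 > x} :=
        (Measure.map_apply (hσ.prodMk hY) hA).symm
    _ = ∫⁻ y, μ.map σ {s | s * y > x} ∂(μ.map Y) := by
        rw [(indepFun_iff_map_prod_eq_prod_map_map hσ.aemeasurable hY.aemeasurable).mp hind,
          Measure.prod_apply_symm hA]
        rfl
    _ = ∫⁻ y, μ {ω | σ ω * y > x} ∂(μ.map Y) := by
        refine lintegral_congr fun y => Measure.map_apply hσ ?_
        exact measurableSet_lt measurable_const (measurable_id.mul measurable_const)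

lemma antitone_measure_gt : Antitone fun t => μ {ω | σ ω > t} :=
  fun _ _ hst => measure_mono fun _ h => lt_of_le_of_lt hst h

lemma IndepFun.toReal_measure_mul_gt_eq_integral [IsFiniteMeasure μ] (hσ : Measurable σ)
    (hY : Measurable Y) (hσ0 : ∀ ω, 0 ≤ σ ω) (hind : IndepFun σ Y μ) {x : ℝ} (hx : 0 < x) :
    (μ {ω | σ ω * Y ω > x}).toReal =
      ∫ y, (Ioi 0).indicator (fun y => (μ {ω | σ ω > x / y}).toReal) y ∂(μ.map Y) := by
  have hmeas : Measurable fun y : ℝ => (Ioi 0).indicator (fun y => μ {ω | σ ω > x / y}) y :=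
    (antitone_measure_gt.measurable.comp (measurable_const.div measurable_id)).indicator
      measurableSet_Ioi
  simp_rw [hind.measure_mul_gt_eq_lintegral hσ hY, measure_mul_const_gt_of_nonneg hσ0 hx]
  rw [← integral_toReal hmeas.aemeasurable
    (ae_of_all _ fun y => (indicator_le_self _ _ y).trans_lt (measure_lt_top _ _))]
  exact congrArg _ (indicator_comp_of_zero ENNReal.toReal_zero).symm

theorem tendsto_measure_mul_gt_div [IsProbabilityMeasure μ] {c : ℝ} (hc : 0 < c) (hα : 0 < α)
    (hσ : Measurable σ) (hY : Measurable Y) (hσ0 : ∀ ω, 0 ≤ σ ω) (hind : IndepFun σ Y μ)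
    (htail : HasPowerTail (fun x => (μ {ω | σ ω > x}).toReal) c α)
    (hint : Integrable (fun ω => max (Y ω) 0 ^ α) μ) :
    Tendsto (fun x => (μ {ω | σ ω * Y ω > x}).toReal / (μ {ω | σ ω > x}).toReal) atTop
      (𝓝 (∫ ω, max (Y ω) 0 ^ α ∂μ)) := by
  have hmax : Measurable fun z : ℝ => max z 0 ^ α :=
    (measurable_id.max measurable_const).pow_const α
  have hint' : Integrable (fun z => max z 0 ^ α) (μ.map Y) :=
    (integrable_map_measure hmax.aestronglyMeasurable hY.aemeasurable).mpr hint
  have hFm : Measurable fun t => (μ {ω | σ ω > t}).toReal :=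
    antitone_measure_gt.measurable.ennreal_toReal
  rw [← integral_map hY.aemeasurable hmax.aestronglyMeasurable]
  refine (htail.tendsto_integral_indicator_comp_div hc hα hFm (fun _ => ENNReal.toReal_nonneg)
    (fun _ => ENNReal.toReal_le_of_le_ofReal zero_le_one (by simpa using prob_le_one))
    hint').congr' ?_
  filter_upwards [eventually_gt_atTop 0] with x hx
  rw [hind.toReal_measure_mul_gt_eq_integral hσ hY hσ0 hx]

theorem tendsto_measure_mul_ge_div [IsProbabilityMeasure μ] {c : ℝ} (hc : 0 < c) (hα : 0 < α)
    (hσ : Measurable σ) (hY : Measurable Y) (hσ0 : ∀ ω, 0 ≤ σ ω) (hind : IndepFun σ Y μ)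
    (htail : HasPowerTail (fun x => (μ {ω | σ ω > x}).toReal) c α)
    (hint : Integrable (fun ω => max (Y ω) 0 ^ α) μ) :
    Tendsto (fun x => (μ {ω | σ ω * Y ω ≥ x}).toReal / (μ {ω | σ ω > x}).toReal) atTop
      (𝓝 (∫ ω, max (Y ω) 0 ^ α ∂μ)) := by
  have hgt := tendsto_measure_mul_gt_div hc hα hσ hY hσ0 hind htail hint
  have hsub : Tendsto (fun x : ℝ => x - 1) atTop atTop :=
    tendsto_atTop_add_const_right _ (-1) tendsto_id
  have hgt_sub : Tendsto (fun x => (μ {ω | σ ω * Y ω > x - 1}).toReal /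
      (μ {ω | σ ω > x}).toReal) atTop (𝓝 (∫ ω, max (Y ω) 0 ^ α ∂μ)) := by
    have h := (hgt.comp hsub).mul (htail.tendsto_comp_sub_one hc)
    rw [mul_one] at h
    refine h.congr' ?_
    filter_upwards [hsub.eventually (htail.eventually_pos hc)] with x hx
    simp only [Function.comp_apply] at hx ⊢
    rw [div_mul_div_cancel₀ hx.ne']
  refine tendsto_of_tendsto_of_tendsto_of_le_of_le' hgt hgt_sub ?_ ?_ <;>
    filter_upwards [htail.eventually_pos hc] with x hx <;>
    gcongr <;> try exact measure_ne_top _ _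
  · exact le_of_lt
  · exact sub_one_lt x

end ProbabilityTheory

lemma tendsto_div_const_mul_of_tendsto_div {ι : Type*} {l : Filter ι} {f g : ι → ℝ} {I : ℝ}
    (hI : I ≠ 0) (h : Tendsto (fun x => f x / g x) l (𝓝 I)) :
    Tendsto (fun x => f x / (I * g x)) l (𝓝 1) := by
  simpa only [div_mul_eq_div_div_swap, div_self hI] using h.div_const I

/-- Two-sided Breiman lemma: if `P(σ > x) ~ c₀ x^(−α)`, `Z` independent of `σ` with
`E[|Z|^(α+ε)] < ∞`, `P(Z > 0) > 0` and `P(Z < 0) > 0`, then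
`P(σZ > x) ~ E[(Z⁺)^α] P(σ > x)` and `P(σZ ≤ −x) ~ E[(Z⁻)^α] P(σ > x)`. -/
theorem stmt5 {Ω : Type*} [MeasurableSpace Ω] (μ : Measure Ω) [IsProbabilityMeasure μ]
    (σ Z : Ω → ℝ) (hσmeas : Measurable σ) (hZmeas : Measurable Z)
    (hσnonneg : ∀ ω, 0 ≤ σ ω)
    (hindep : IndepFun σ Z μ)
    (c₀ α : ℝ) (hc₀ : 0 < c₀) (hα : 0 < α)
    (htail : Tendsto (fun x : ℝ =>
      (μ {ω | σ ω > x}).toReal / (c₀ * x ^ (-α))) atTop (nhds 1))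
    (ε : ℝ) (hε : 0 < ε)
    (hmom : Integrable (fun ω => |Z ω| ^ (α + ε)) μ)
    (hZpos : 0 < (μ {ω | 0 < Z ω}).toReal)
    (hZneg : 0 < (μ {ω | Z ω < 0}).toReal) :
    Tendsto (fun x : ℝ =>
        (μ {ω | σ ω * Z ω > x}).toReal /
          ((∫ ω, (max (Z ω) 0) ^ α ∂μ) * (μ {ω | σ ω > x}).toReal))
      atTop (nhds 1) ∧
    Tendsto (fun x : ℝ =>
        (μ {ω | σ ω * Z ω ≤ -x}).toReal /
          ((∫ ω, (max (-Z ω) 0) ^ α ∂μ) * (μ {ω | σ ω > x}).toReal))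
      atTop (nhds 1) := by
  have hZmeas_neg : Measurable fun ω => -Z ω := hZmeas.neg
  have hint := integrable_max_rpow_of_integrable_abs_rpow hα.le hε.le hZmeas hmom
  have hint_neg := integrable_max_rpow_of_integrable_abs_rpow hα.le hε.le hZmeas_neg
    (by simpa only [abs_neg] using hmom)
  have hpos := integral_max_rpow_pos hint (ENNReal.toReal_pos_iff.mp hZpos).1
  have hpos_neg := integral_max_rpow_pos hint_neg
    (by simpa only [neg_pos] using (ENNReal.toReal_pos_iff.mp hZneg).1)
  have hneg := tendsto_measure_mul_ge_div hc₀ hα hσmeas hZmeas_neg hσnonneg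
    (hindep.comp measurable_id measurable_neg) htail hint_neg
  simp_rw [mul_neg, ge_iff_le, le_neg] at hneg
  exact ⟨tendsto_div_const_mul_of_tendsto_div hpos.ne'
      (tendsto_measure_mul_gt_div hc₀ hα hσmeas hZmeas hσnonneg hindep htail hint),
    tendsto_div_const_mul_of_tendsto_div hpos_neg.ne' hneg⟩
end

section
/- Let Y ≥ 0 be regularly varying: P(Y > x) = x^{−α} L(x) with L slowly varying and α > 0, and let U, V be nonnegative random variables independent of Y with E[U^{α+ε}], E[V^{α+ε}] < ∞ for some ε > 0. Then lim_{x→∞} P(min(U·Y, V·Y) > x)/P(Y > x) = E[min(U, V)^α]. -/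
/-!
Breiman's lemma for `W = min U V`, which applies because `min (U Y) (V Y) = W Y` when `Y ≥ 0`.
Conditioning on the independent `W`, the ratio `P(W Y > x) / P(Y > x)` is the expectation of
`F (x / W) / F x` with `F x = P(Y > x)`, and regular variation sends this integrand to `W ^ α`.
Iterating `F y ≤ 2 ^ δ F (2 y)`, valid for large `y` because `2 ^ α < 2 ^ δ`, gives the Potter
bound `F (x / w) ≤ C (1 + w ^ δ) F x`, so `E[W ^ δ] < ∞` licenses dominated convergence.
-/

open MeasureTheory ProbabilityTheory Filter Topology

def IsRegularlyVarying (F : ℝ → ℝ) (ρ : ℝ) : Prop :=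
  ∀ c : ℝ, 0 < c → Tendsto (fun x => F (c * x) / F x) atTop (𝓝 (c ^ ρ))

theorem le_pow_mul_of_forall_le_mul_two {F : ℝ → ℝ} {K X : ℝ} (hX : 0 ≤ X) (hK : 0 ≤ K)
    (h : ∀ y, X ≤ y → F y ≤ K * F (2 * y)) (k : ℕ) {y : ℝ} (hy : X ≤ y) :
    F y ≤ K ^ k * F (2 ^ k * y) := by
  induction k with
  | zero => simp
  | succ n ih =>
    have h2y : X ≤ 2 ^ n * y :=
      hy.trans (le_mul_of_one_le_left (hX.trans hy) (one_le_pow₀ one_le_two))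
    calc F y ≤ K ^ n * F (2 ^ n * y) := ih
      _ ≤ K ^ n * (K * F (2 * (2 ^ n * y))) := by gcongr; exact h _ h2y
      _ = K ^ (n + 1) * F (2 ^ (n + 1) * y) := by ring_nf

namespace IsRegularlyVarying

theorem of_eq_rpow_mul {F L : ℝ → ℝ} {ρ : ℝ}
    (hL : ∀ c : ℝ, 0 < c → Tendsto (fun x => L (c * x) / L x) atTop (𝓝 1))
    (hF : ∀ x : ℝ, 0 < x → F x = x ^ ρ * L x) : IsRegularlyVarying F ρ := by
  intro c hc
  have h := (hL c hc).const_mul (c ^ ρ)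
  rw [mul_one] at h
  refine h.congr' ?_
  filter_upwards [eventually_gt_atTop 0] with x hx
  rw [hF x hx, hF (c * x) (mul_pos hc hx), Real.mul_rpow hc.le hx.le, mul_div_mul_comm,
    mul_div_cancel_right₀ _ (Real.rpow_pos_of_pos hx ρ).ne']

theorem pos_of_antitone {F : ℝ → ℝ} {ρ : ℝ} (hF : IsRegularlyVarying F ρ) (hanti : Antitone F)
    (hnonneg : ∀ x, 0 ≤ F x) (x : ℝ) : 0 < F x := by
  have hne : ∀ᶠ y in atTop, F (1 * y) / F y ≠ 0 := by
    refine (hF 1 one_pos).eventually_ne ?_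
    rw [Real.one_rpow]; exact one_ne_zero
  obtain ⟨y, hy, hxy⟩ := (hne.and (eventually_ge_atTop x)).exists
  have hFy : 0 < F y := (hnonneg y).lt_of_ne fun h => hy (by rw [one_mul, ← h, div_zero])
  exact hFy.trans_le (hanti hxy)

variable {F : ℝ → ℝ} {α δ : ℝ}

theorem eventually_le_two_rpow_mul (hF : IsRegularlyVarying F (-α)) (hpos : ∀ x, 0 < F x)
    (hαδ : α < δ) : ∀ᶠ y in atTop, F y ≤ 2 ^ δ * F (2 * y) := by
  have hlt : (2 : ℝ) ^ (-δ) < 2 ^ (-α) :=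
    Real.rpow_lt_rpow_of_exponent_lt one_lt_two (neg_lt_neg hαδ)
  filter_upwards [(hF 2 two_pos).eventually_const_lt hlt] with y hy
  rw [lt_div_iff₀ (hpos y)] at hy
  have h := mul_le_mul_of_nonneg_left hy.le (Real.rpow_nonneg zero_le_two δ)
  rwa [← mul_assoc, ← Real.rpow_add two_pos, add_neg_cancel, Real.rpow_zero, one_mul] at h

theorem exists_potter_bound (hF : IsRegularlyVarying F (-α)) (hanti : Antitone F)
    (hpos : ∀ x, 0 < F x) (hαδ : α < δ) (hδ : 0 ≤ δ) :
    ∃ X > 0, ∀ y z, X ≤ y → y ≤ z → F y ≤ 2 ^ δ * (z / y) ^ δ * F z := by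
  obtain ⟨X₀, hX₀⟩ := eventually_atTop.1 (hF.eventually_le_two_rpow_mul hpos hαδ)
  refine ⟨max X₀ 1, by positivity, fun y z hy hyz => ?_⟩
  have hy₀ : 0 < y := lt_of_lt_of_le (by positivity) hy
  obtain ⟨n, hn, hn'⟩ := exists_nat_pow_near ((one_le_div hy₀).2 hyz) one_lt_two
  have hzy : 0 ≤ z / y := (div_pos (hy₀.trans_le hyz) hy₀).le
  rw [div_lt_iff₀ hy₀] at hn'
  calc F y ≤ (2 ^ δ) ^ (n + 1) * F (2 ^ (n + 1) * y) :=
        le_pow_mul_of_forall_le_mul_two (by positivity) (by positivity)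
          (fun y hy => hX₀ y (le_of_max_le_left hy)) (n + 1) hy
    _ ≤ (2 ^ δ) ^ (n + 1) * F z := by gcongr; exact hanti (by linarith)
    _ = (2 * 2 ^ n) ^ δ * F z := by rw [Real.rpow_pow_comm zero_le_two, pow_succ']
    _ ≤ (2 * (z / y)) ^ δ * F z := by gcongr; exact (hpos z).le
    _ = 2 ^ δ * (z / y) ^ δ * F z := by rw [Real.mul_rpow zero_le_two hzy]

theorem exists_le_mul_one_add_rpow (hF : IsRegularlyVarying F (-α)) (hanti : Antitone F)
    (hpos : ∀ x, 0 < F x) (hle : ∀ x, F x ≤ 1) (hαδ : α < δ) (hδ : 0 ≤ δ) :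
    ∃ C > 0, ∃ X, ∀ x, X ≤ x → ∀ w, 0 < w → F (x / w) ≤ C * (1 + w ^ δ) * F x := by
  obtain ⟨X, hX, hpotter⟩ := hF.exists_potter_bound hanti hpos hαδ hδ
  have hδ₁ : 1 ≤ (2 : ℝ) ^ δ := Real.one_le_rpow one_le_two hδ
  have hC : (2 : ℝ) ^ δ ≤ 2 ^ δ / F X := le_div_self (by positivity) (hpos X) (hle X)
  refine ⟨2 ^ δ / F X, div_pos (by positivity) (hpos X), X, fun x hx w hw => ?_⟩
  have hx₀ : 0 < x := hX.trans_le hx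
  have hFx : 0 ≤ F x := (hpos x).le
  have hwδ : 0 ≤ w ^ δ := Real.rpow_nonneg hw.le δ
  rcases le_or_gt w 1 with hw₁ | hw₁
  · calc F (x / w) ≤ 1 * F x := by rw [one_mul]; exact hanti (le_div_self hx₀.le hw hw₁)
      _ ≤ 2 ^ δ / F X * (1 + w ^ δ) * F x := by
          gcongr
          exact one_le_mul_of_one_le_of_one_le (hδ₁.trans hC) (le_add_of_nonneg_right hwδ)
  rcases le_or_gt X (x / w) with hxw | hxw
  · calc F (x / w) ≤ 2 ^ δ * (x / (x / w)) ^ δ * F x :=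
          hpotter _ _ hxw (div_le_self hx₀.le hw₁.le)
      _ ≤ 2 ^ δ / F X * (1 + w ^ δ) * F x := by
          rw [div_div_cancel₀ hx₀.ne']; gcongr <;> linarith
  -- Here `F (x / w) ≤ 1`, and the Potter bound at `X ≤ x` bounds `F x` below.
  rw [div_lt_iff₀ hw, ← div_lt_iff₀' hX] at hxw
  have hFX : F X ≤ 2 ^ δ * w ^ δ * F x :=
    (hpotter X x le_rfl hx).trans (by gcongr)
  calc F (x / w) ≤ 1 := hle _
    _ ≤ 2 ^ δ / F X * w ^ δ * F x := by
        rw [mul_assoc, div_mul_eq_mul_div, le_div_iff₀ (hpos X), one_mul, ← mul_assoc]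
        exact hFX
    _ ≤ 2 ^ δ / F X * (1 + w ^ δ) * F x := by gcongr <;> linarith

end IsRegularlyVarying

theorem ProbabilityTheory.IndepFun.measure_preimage_eq_lintegral {Ω β γ : Type*}
    [MeasurableSpace Ω] [MeasurableSpace β] [MeasurableSpace γ] {μ : Measure Ω}
    [IsFiniteMeasure μ]
    {f : Ω → β} {g : Ω → γ} (hfg : IndepFun f g μ) (hf : Measurable f) (hg : Measurable g)
    {s : Set (β × γ)} (hs : MeasurableSet s) :
    μ ((fun ω => (f ω, g ω)) ⁻¹' s) = ∫⁻ ω, μ ((fun ω' => (f ω, g ω')) ⁻¹' s) ∂μ := by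
  rw [← Measure.map_apply (hf.prodMk hg) hs,
    (indepFun_iff_map_prod_eq_prod_map_map hf.aemeasurable hg.aemeasurable).1 hfg,
    Measure.prod_apply hs, lintegral_map (measurable_measure_prodMk_left hs) hf]
  congr with ω
  rw [Measure.map_apply hg (measurable_prodMk_left hs)]
  rfl

theorem setOf_const_mul_gt {ι : Type*} (Y : ι → ℝ) {w : ℝ} (hw : 0 < w) (x : ℝ) :
    {i | w * Y i > x} = {i | Y i > x / w} :=
  Set.ext fun _ => (div_lt_iff₀' hw).symm

section Breiman

variable {Ω : Type*} [MeasurableSpace Ω] {μ : Measure Ω} {Y : Ω → ℝ} {α δ : ℝ}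

theorem tendsto_measure_const_mul_gt_div_measure_gt
    (hRV : IsRegularlyVarying (fun x => (μ {ω | Y ω > x}).toReal) (-α)) (hα : 0 < α)
    {w : ℝ} (hw : 0 ≤ w) :
    Tendsto (fun x => (μ {ω | w * Y ω > x}).toReal / (μ {ω | Y ω > x}).toReal) atTop
      (𝓝 (w ^ α)) := by
  rcases hw.eq_or_lt with rfl | hw
  · rw [Real.zero_rpow hα.ne']
    refine tendsto_const_nhds.congr' ?_
    filter_upwards [eventually_ge_atTop 0] with x hx
    simp [not_lt.2 hx]
  · have h := hRV w⁻¹ (inv_pos.2 hw)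
    rw [Real.inv_rpow hw.le, Real.rpow_neg hw.le, inv_inv] at h
    simpa only [setOf_const_mul_gt Y hw, inv_mul_eq_div] using h

theorem exists_measure_const_mul_gt_div_measure_gt_le [IsProbabilityMeasure μ]
    (hRV : IsRegularlyVarying (fun x => (μ {ω | Y ω > x}).toReal) (-α)) (hαδ : α < δ)
    (hδ : 0 ≤ δ) :
    ∃ C > 0, ∃ X, ∀ x, X ≤ x → ∀ w, 0 ≤ w →
      (μ {ω | w * Y ω > x}).toReal / (μ {ω | Y ω > x}).toReal ≤ C * (1 + w ^ δ) := by
  have hanti : Antitone fun x => (μ {ω | Y ω > x}).toReal := fun a b hab =>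
    ENNReal.toReal_mono (measure_ne_top μ _) (measure_mono fun ω hω => hab.trans_lt hω)
  have hpos := hRV.pos_of_antitone hanti fun _ => ENNReal.toReal_nonneg
  obtain ⟨C, hC, X, hCX⟩ :=
    hRV.exists_le_mul_one_add_rpow hanti hpos (fun _ => measureReal_le_one) hαδ hδ
  refine ⟨C, hC, max X 0, fun x hx w hw => ?_⟩
  rw [div_le_iff₀ (hpos x)]
  rcases hw.eq_or_lt with rfl | hw
  · simp only [zero_mul, gt_iff_lt, not_lt.2 (le_of_max_le_right hx), Set.ofPred_false,
      measure_empty, ENNReal.toReal_zero]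
    exact mul_nonneg (by positivity) (hpos x).le
  · rw [setOf_const_mul_gt Y hw]
    exact hCX x (le_of_max_le_left hx) w hw

theorem tendsto_measure_mul_gt_div_measure_gt [IsProbabilityMeasure μ] {W : Ω → ℝ}
    (hW : Measurable W) (hY : Measurable Y) (hW₀ : ∀ ω, 0 ≤ W ω) (hindep : IndepFun W Y μ)
    (hα : 0 < α) (hαδ : α < δ)
    (hRV : IsRegularlyVarying (fun x => (μ {ω | Y ω > x}).toReal) (-α))
    (hWδ : Integrable (fun ω => W ω ^ δ) μ) :
    Tendsto (fun x => (μ {ω | W ω * Y ω > x}).toReal / (μ {ω | Y ω > x}).toReal) atTop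
      (𝓝 (∫ ω, W ω ^ α ∂μ)) := by
  have hs : ∀ x : ℝ, MeasurableSet {p : ℝ × ℝ | p.1 * p.2 > x} := fun x =>
    measurableSet_lt measurable_const (measurable_fst.mul measurable_snd)
  have hmeas : ∀ x, Measurable fun ω => μ {ω' | W ω * Y ω' > x} := fun x => by
    convert (measurable_measure_prodMk_left (ν := μ.map Y) (hs x)).comp hW using 1
    funext ω
    rw [Function.comp_apply, Measure.map_apply hY (measurable_prodMk_left (hs x))]
    rfl
  have hcond : ∀ x, (μ {ω | W ω * Y ω > x}).toReal =
      ∫ ω, (μ {ω' | W ω * Y ω' > x}).toReal ∂μ := fun x => by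
    rw [integral_toReal (hmeas x).aemeasurable (ae_of_all _ fun _ => measure_lt_top _ _)]
    exact congrArg ENNReal.toReal (hindep.measure_preimage_eq_lintegral hW hY (hs x))
  obtain ⟨C, hC, X, hCX⟩ :=
    exists_measure_const_mul_gt_div_measure_gt_le hRV hαδ (hα.trans hαδ).le
  simp_rw [hcond, ← integral_div]
  refine tendsto_integral_filter_of_dominated_convergence (fun ω => C * (1 + W ω ^ δ)) ?_ ?_
    ((integrable_const 1).add hWδ |>.const_mul C) ?_
  · exact .of_forall fun x => ((hmeas x).ennreal_toReal.div_const _).aestronglyMeasurable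
  · filter_upwards [eventually_ge_atTop X] with x hx
    refine ae_of_all _ fun ω => ?_
    rw [Real.norm_of_nonneg (by positivity)]
    exact hCX x hx _ (hW₀ ω)
  · exact ae_of_all _ fun ω => tendsto_measure_const_mul_gt_div_measure_gt hRV hα (hW₀ ω)

end Breiman

theorem stmt7_general {Ω : Type*} [MeasurableSpace Ω] (μ : Measure Ω) [IsProbabilityMeasure μ]
    (Y U V : Ω → ℝ) (hYmeas : Measurable Y) (hUmeas : Measurable U) (hVmeas : Measurable V)
    (hYnonneg : ∀ ω, 0 ≤ Y ω) (hUnonneg : ∀ ω, 0 ≤ U ω) (hVnonneg : ∀ ω, 0 ≤ V ω)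
    (hindep : IndepFun (fun ω => (U ω, V ω)) Y μ)
    (α : ℝ) (hα : 0 < α) (L : ℝ → ℝ)
    (hL : ∀ c : ℝ, 0 < c →
      Tendsto (fun x : ℝ => L (c * x) / L x) atTop (nhds 1))
    (htail : ∀ x : ℝ, 0 < x → (μ {ω | Y ω > x}).toReal = x ^ (-α) * L x)
    (ε : ℝ) (hε : 0 < ε)
    (hUmom : Integrable (fun ω => U ω ^ (α + ε)) μ) :
    Tendsto (fun x : ℝ =>
        (μ {ω | min (U ω * Y ω) (V ω * Y ω) > x}).toReal / (μ {ω | Y ω > x}).toReal)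
      atTop (nhds (∫ ω, (min (U ω) (V ω)) ^ α ∂μ)) := by
  have hW₀ : ∀ ω, 0 ≤ min (U ω) (V ω) := fun ω => le_min (hUnonneg ω) (hVnonneg ω)
  have hWmom : Integrable (fun ω => min (U ω) (V ω) ^ (α + ε)) μ := by
    refine hUmom.mono' ((hUmeas.min hVmeas).pow_const _).aestronglyMeasurable
      (ae_of_all _ fun ω => ?_)
    rw [Real.norm_of_nonneg (Real.rpow_nonneg (hW₀ ω) _)]
    exact Real.rpow_le_rpow (hW₀ ω) (min_le_left _ _) (by linarith)
  have h := tendsto_measure_mul_gt_div_measure_gt (hUmeas.min hVmeas) hYmeas hW₀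
    (hindep.comp (measurable_fst.min measurable_snd) measurable_id) hα (lt_add_of_pos_right α hε)
    (IsRegularlyVarying.of_eq_rpow_mul hL htail) hWmom
  simpa only [min_mul_of_nonneg _ _ (hYnonneg _)] using h

/-- Breiman-type result for minima: if `Y ≥ 0` is regularly varying of index `α`,
`(U, V)` is independent of `Y`, nonnegative, with moments of order `α + ε`, then
`P(min(UY, VY) > x)/P(Y > x) → E[min(U, V)^α]`. -/
theorem stmt7 {Ω : Type*} [MeasurableSpace Ω] (μ : Measure Ω) [IsProbabilityMeasure μ]
    (Y U V : Ω → ℝ) (hYmeas : Measurable Y) (hUmeas : Measurable U) (hVmeas : Measurable V)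
    (hYnonneg : ∀ ω, 0 ≤ Y ω) (hUnonneg : ∀ ω, 0 ≤ U ω) (hVnonneg : ∀ ω, 0 ≤ V ω)
    (hindep : IndepFun (fun ω => (U ω, V ω)) Y μ)
    (α : ℝ) (hα : 0 < α) (L : ℝ → ℝ)
    (hL : ∀ c : ℝ, 0 < c →
      Tendsto (fun x : ℝ => L (c * x) / L x) atTop (nhds 1))
    (htail : ∀ x : ℝ, 0 < x → (μ {ω | Y ω > x}).toReal = x ^ (-α) * L x)
    (ε : ℝ) (hε : 0 < ε)
    (hUmom : Integrable (fun ω => U ω ^ (α + ε)) μ)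
    (hVmom : Integrable (fun ω => V ω ^ (α + ε)) μ) :
    Tendsto (fun x : ℝ =>
        (μ {ω | min (U ω * Y ω) (V ω * Y ω) > x}).toReal / (μ {ω | Y ω > x}).toReal)
      atTop (nhds (∫ ω, (min (U ω) (V ω)) ^ α ∂μ)) :=
  stmt7_general μ Y U V hYmeas hUmeas hVmeas hYnonneg hUnonneg hVnonneg hindep α hα L hL htail ε hε
    hUmom
end

section
/- Let (A_t, B_t), t ∈ ℤ, be iid pairs of nonnegative random variables with E[log⁺ A₀] < ∞, E[log⁺ B₀] < ∞, and E[log A₀] < 0. Then the series Y_t = B_t + Σ_{k=1}^∞ A_t A_{t−1} ⋯ A_{t−k+1} B_{t−k} converges almost surely for every t and defines the unique strictly stationary causal solution of the stochastic recurrence equation Y_t = A_t Y_{t−1} + B_t. -/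
/-!
Fix `t` and choose a truncation level `M` with `E[max (log A₀) (-M)] < 0`; by monotone convergence
it exists even when `E[log A₀] = -∞`. With `x_i = max (log A_{t-i}) (-M)` and
`ℓ_i = log⁺ B_{t-i}`, the `k`-th term of the series is at most `exp (x_0 + ⋯ + x_{k-1} + ℓ_k)`.
By the strong law of large numbers `(x_0 + ⋯ + x_{k-1}) / k → E x_0 < 0`, and since the Cesàro
means of `ℓ` converge, `ℓ_k / k → 0`. Hence the terms decay geometrically, the series converges
a.s., and the products `A_t ⋯ A_{t-n+1}` tend to `0`.

`Y_t` is one fixed measurable function of the shifted input `(A_{t+s}, B_{t+s})_{s ∈ ℤ}`, whose law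
does not depend on `t`; this gives stationarity, and causality because only `s ≤ 0` enters. For a
second stationary solution `Y'`, iterating the recursion gives
`Y'_t = Σ_{k<n} A_t ⋯ A_{t-k+1} B_{t-k} + A_t ⋯ A_{t-n+1} Y'_{t-n}`. All `Y'_{t-n}` have the same
law, so the last term tends to `0` in probability, and `Y'_t = Y_t` a.s.
-/

open MeasureTheory ProbabilityTheory Filter Finset Topology

lemma tendsto_div_natCast_zero_of_tendsto_avg {L : ℕ → ℝ} {c : ℝ}
    (hL : Tendsto (fun n : ℕ => (∑ i ∈ range n, L i) / n) atTop (𝓝 c)) :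
    Tendsto (fun n : ℕ => L n / n) atTop (𝓝 0) := by
  have hsucc : Tendsto (fun n : ℕ => (∑ i ∈ range (n + 1), L i) / (n + 1 : ℕ)) atTop (𝓝 c) :=
    hL.comp (tendsto_add_atTop_nat 1)
  have hratio : Tendsto (fun n : ℕ => ((n : ℝ) + 1) / n) atTop (𝓝 1) := by
    simpa using (tendsto_natCast_div_add_atTop (1 : ℝ)).inv₀ one_ne_zero
  have hdiff := (hsucc.mul hratio).sub hL
  rw [mul_one, sub_self] at hdiff
  refine hdiff.congr' ?_
  filter_upwards [eventually_gt_atTop 0] with n hn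
  rw [sum_range_succ]
  push_cast
  field_simp
  ring

lemma summable_exp_of_tendsto_div_natCast_neg {u : ℕ → ℝ} {m : ℝ} (hm : m < 0)
    (hu : Tendsto (fun n : ℕ => u n / n) atTop (𝓝 m)) :
    Summable fun n => Real.exp (u n) := by
  have hbound : ∀ᶠ n : ℕ in atTop, u n ≤ m / 2 * n := by
    filter_upwards [hu.eventually_lt_const (by linarith : m < m / 2), eventually_gt_atTop 0]
      with n hn hpos
    rw [div_lt_iff₀ (by exact_mod_cast hpos)] at hn
    linarith
  have hratio : Real.exp (m / 2) < 1 := Real.exp_lt_one_iff.2 (by linarith)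
  refine .of_norm_bounded_eventually_nat
    (summable_geometric_of_lt_one (Real.exp_nonneg _) hratio) ?_
  filter_upwards [hbound] with n hn
  rw [Real.norm_of_nonneg (Real.exp_nonneg _), ← Real.exp_nat_mul, mul_comm]
  exact Real.exp_le_exp.2 hn

lemma summable_prod_mul_of_tendsto_avg {a b x ℓ : ℕ → ℝ} {m c : ℝ} (hm : m < 0)
    (ha : ∀ i, 0 ≤ a i) (hb : ∀ i, 0 ≤ b i)
    (hax : ∀ i, a i ≤ Real.exp (x i)) (hbℓ : ∀ i, b i ≤ Real.exp (ℓ i))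
    (hx : Tendsto (fun n : ℕ => (∑ i ∈ range n, x i) / n) atTop (𝓝 m))
    (hℓ : Tendsto (fun n : ℕ => (∑ i ∈ range n, ℓ i) / n) atTop (𝓝 c)) :
    Summable fun k => (∏ j ∈ range k, a j) * b k := by
  have hu : Tendsto (fun n : ℕ => ((∑ i ∈ range n, x i) + ℓ n) / n) atTop (𝓝 m) := by
    simpa only [add_div, add_zero] using hx.add (tendsto_div_natCast_zero_of_tendsto_avg hℓ)
  refine (summable_exp_of_tendsto_div_natCast_neg hm hu).of_nonneg_of_le
    (fun k => mul_nonneg (prod_nonneg fun j _ => ha j) (hb k)) (fun k => ?_)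
  calc (∏ j ∈ range k, a j) * b k ≤ (∏ j ∈ range k, Real.exp (x j)) * Real.exp (ℓ k) :=
        mul_le_mul (prod_le_prod (fun j _ => ha j) fun j _ => hax j) (hbℓ k) (hb k)
          (prod_nonneg fun j _ => (Real.exp_pos _).le)
    _ = Real.exp ((∑ i ∈ range k, x i) + ℓ k) := by rw [Real.exp_add, Real.exp_sum]

lemma tendsto_prod_of_tendsto_avg {a x : ℕ → ℝ} {m : ℝ} (hm : m < 0) (ha : ∀ i, 0 ≤ a i)
    (hax : ∀ i, a i ≤ Real.exp (x i))
    (hx : Tendsto (fun n : ℕ => (∑ i ∈ range n, x i) / n) atTop (𝓝 m)) :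
    Tendsto (fun n => ∏ j ∈ range n, a j) atTop (𝓝 0) := by
  have := summable_prod_mul_of_tendsto_avg (b := 1) (ℓ := 0) (c := 0) hm ha
    (fun _ => zero_le_one) hax (fun _ => by simp) hx (by simp)
  simpa using this.tendsto_atTop_zero

lemma tsum_prod_mul_eq_mul_tsum_add {a b : ℤ → ℝ} {t : ℤ}
    (h : Summable fun k : ℕ => (∏ j ∈ range k, a (t - j)) * b (t - k)) :
    ∑' k : ℕ, (∏ j ∈ range k, a (t - j)) * b (t - k)
      = a t * ∑' k : ℕ, (∏ j ∈ range k, a (t - 1 - j)) * b (t - 1 - k) + b t := by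
  rw [h.tsum_eq_zero_add, ← tsum_mul_left, add_comm]
  simp only [prod_range_succ', prod_range_zero, one_mul, Nat.cast_succ, Nat.cast_zero, sub_zero,
    sub_add_eq_sub_sub_swap]
  congr 1
  exact tsum_congr fun k => by ring

lemma eq_sum_add_prod_mul_of_forall_eq {a b y : ℤ → ℝ} (h : ∀ s, y s = a s * y (s - 1) + b s)
    (t : ℤ) (n : ℕ) :
    y t = ∑ k ∈ range n, (∏ j ∈ range k, a (t - j)) * b (t - k)
      + (∏ j ∈ range n, a (t - j)) * y (t - n) := by
  induction n with
  | zero => simp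
  | succ n ih =>
    rw [ih, h (t - n), sum_range_succ, prod_range_succ, Nat.cast_succ, ← sub_sub]
    ring

section

variable {Ω : Type*} [MeasurableSpace Ω] {μ : Measure Ω}

lemma lintegral_ofReal_ne_top_of_integrable_max_zero {h : Ω → ℝ}
    (hpos : Integrable (fun ω => max (h ω) 0) μ) :
    ∫⁻ ω, ENNReal.ofReal (h ω) ∂μ ≠ ⊤ := by
  have := (lintegral_ofReal_ne_top_iff_integrable (f := fun ω => max (h ω) 0)
    hpos.aestronglyMeasurable (ae_of_all _ fun _ => le_max_right _ _)).2 hpos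
  simpa [ENNReal.ofReal_max] using this

lemma lintegral_ofReal_lt_lintegral_ofReal_neg {h : Ω → ℝ} (hmeas : AEStronglyMeasurable h μ)
    (hpos : Integrable (fun ω => max (h ω) 0) μ) (hneg : ¬ Integrable h μ ∨ ∫ ω, h ω ∂μ < 0) :
    ∫⁻ ω, ENNReal.ofReal (h ω) ∂μ < ∫⁻ ω, ENNReal.ofReal (-h ω) ∂μ := by
  have hposfin := lintegral_ofReal_ne_top_of_integrable_max_zero hpos
  rcases hneg with hnint | hlt
  · suffices ∫⁻ ω, ENNReal.ofReal (-h ω) ∂μ = ⊤ by rw [this]; exact hposfin.lt_top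
    by_contra hfin
    have hnegpart : Integrable (fun ω => max (-h ω) 0) μ := by
      refine (lintegral_ofReal_ne_top_iff_integrable (f := fun ω => max (-h ω) 0)
        (by fun_prop) (ae_of_all _ fun _ => le_max_right _ _)).1 ?_
      simpa [ENNReal.ofReal_max] using hfin
    exact hnint ((hpos.sub hnegpart).congr
      (ae_of_all _ fun ω => max_zero_sub_max_neg_zero_eq_self (h ω)))
  · have hi : Integrable h μ := Integrable.of_integral_ne_zero hlt.ne
    rw [integral_eq_lintegral_pos_part_sub_lintegral_neg_part hi, sub_neg] at hlt
    exact (ENNReal.toReal_lt_toReal hposfin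
      (lintegral_ofReal_ne_top_of_integrable_max_zero hi.neg_part)).1 hlt

lemma exists_integral_max_neg_lt_zero [IsFiniteMeasure μ] {h : Ω → ℝ}
    (hmeas : AEStronglyMeasurable h μ) (hpos : Integrable (fun ω => max (h ω) 0) μ)
    (hneg : ¬ Integrable h μ ∨ ∫ ω, h ω ∂μ < 0) :
    ∃ M : ℝ, Integrable (fun ω => max (h ω) (-M)) μ ∧ ∫ ω, max (h ω) (-M) ∂μ < 0 := by
  -- `∫ max h (-M) = ∫⁻ h⁺ - ∫⁻ min (-h) M`, and the last integral increases to `∫⁻ h⁻ > ∫⁻ h⁺`.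
  have hmct : Tendsto (fun M : ℕ => ∫⁻ ω, ENNReal.ofReal (min (-h ω) M) ∂μ) atTop
      (𝓝 (∫⁻ ω, ENNReal.ofReal (-h ω) ∂μ)) := by
    refine lintegral_tendsto_of_tendsto_of_monotone (fun M => by fun_prop)
      (ae_of_all _ fun ω M N hMN => ?_) (ae_of_all _ fun ω => ?_)
    · exact ENNReal.ofReal_le_ofReal (min_le_min_left _ (by exact_mod_cast hMN))
    · refine tendsto_const_nhds.congr' ?_
      filter_upwards [eventually_ge_atTop ⌈-h ω⌉₊] with M hM
      rw [min_eq_left ((Nat.le_ceil _).trans (by exact_mod_cast hM))]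
  obtain ⟨M, hM⟩ := (hmct.eventually
    (lt_mem_nhds (lintegral_ofReal_lt_lintegral_ofReal_neg hmeas hpos hneg))).exists
  have hM0 : (0 : ℝ) ≤ M := M.cast_nonneg
  have hint : Integrable (fun ω => max (h ω) (-M)) μ := by
    refine (hpos.add (integrable_const (M : ℝ))).mono' (by fun_prop) (ae_of_all _ fun ω => ?_)
    simp only [Pi.add_apply]
    rw [Real.norm_eq_abs, abs_le]
    constructor
    · linarith [le_max_right (h ω) (-M), le_max_right (h ω) 0]
    · exact max_le (by linarith [le_max_left (h ω) 0]) (by linarith [le_max_right (h ω) 0])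
  refine ⟨M, hint, ?_⟩
  rw [integral_eq_lintegral_pos_part_sub_lintegral_neg_part hint, sub_neg]
  have hposeq : ∀ ω, ENNReal.ofReal (max (h ω) (-M)) = ENNReal.ofReal (h ω) := fun ω => by
    simp [ENNReal.ofReal_max, ENNReal.ofReal_eq_zero.2 (neg_nonpos.2 hM0)]
  have hnegeq : ∀ ω, -max (h ω) (-M) = min (-h ω) M := fun ω => by
    rw [← min_neg_neg, neg_neg]
  have htruncfin : ∫⁻ ω, ENNReal.ofReal (min (-h ω) M) ∂μ ≠ ⊤ :=
    ne_top_of_le_ne_top (by simp [lintegral_const, ENNReal.mul_eq_top])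
      (lintegral_mono fun ω => ENNReal.ofReal_le_ofReal (min_le_right (-h ω) (M : ℝ)))
  simp only [hposeq, hnegeq]
  exact (ENNReal.toReal_lt_toReal (lintegral_ofReal_ne_top_of_integrable_max_zero hpos)
    htruncfin).2 hM

lemma tendstoInMeasure_mul_of_identDistrib [IsFiniteMeasure μ] {P V : ℕ → Ω → ℝ} {W : Ω → ℝ}
    (hP : TendstoInMeasure μ P atTop 0) (hV : ∀ n, IdentDistrib (V n) W μ μ) :
    TendstoInMeasure μ (fun n ω => P n ω * V n ω) atTop 0 := by
  have htail : Tendsto (fun r : ℝ => μ.map W {x | r < ‖x‖}) atTop (𝓝 0) := by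
    simpa using tendsto_measure_norm_gt_of_isTightMeasureSet
      (isTightMeasureSet_singleton (μ := μ.map W))
  have htailV : ∀ n (r : ℝ), μ {ω | r < ‖V n ω‖} = μ.map W {x | r < ‖x‖} := fun n r => by
    rw [← (hV n).map_eq, Measure.map_apply_of_aemeasurable (hV n).aemeasurable_fst
      (measurableSet_lt measurable_const measurable_norm)]
    rfl
  simp only [tendstoInMeasure_iff_norm, Pi.zero_apply, sub_zero] at hP ⊢
  intro ε hε
  rw [ENNReal.tendsto_nhds_zero]
  intro δ hδ
  obtain ⟨K, hK, hKpos⟩ := ((ENNReal.tendsto_nhds_zero.1 htail (δ / 2)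
    (ENNReal.half_pos hδ.ne')).and (eventually_gt_atTop 0)).exists
  filter_upwards [ENNReal.tendsto_nhds_zero.1 (hP (ε / K) (div_pos hε hKpos)) (δ / 2)
    (ENNReal.half_pos hδ.ne')] with n hn
  have hsub : {ω | ε ≤ ‖P n ω * V n ω‖} ⊆ {ω | ε / K ≤ ‖P n ω‖} ∪ {ω | K < ‖V n ω‖} := by
    intro ω hω
    by_contra hcon
    simp only [Set.mem_union, Set.mem_ofPred_eq, not_or, not_le, not_lt] at hcon hω
    have : ‖P n ω * V n ω‖ < ε := calc
      ‖P n ω * V n ω‖ = ‖P n ω‖ * ‖V n ω‖ := norm_mul _ _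
      _ ≤ ‖P n ω‖ * K := by gcongr; exact hcon.2
      _ < ε := (lt_div_iff₀ hKpos).1 hcon.1
    exact this.not_ge hω
  calc μ {ω | ε ≤ ‖P n ω * V n ω‖}
      ≤ μ {ω | ε / K ≤ ‖P n ω‖} + μ {ω | K < ‖V n ω‖} := (measure_mono hsub).trans
        (measure_union_le _ _)
    _ ≤ δ / 2 + δ / 2 := add_le_add hn (htailV n K ▸ hK)
    _ = δ := ENNReal.add_halves δ

variable {E F : Type*} [MeasurableSpace E] [MeasurableSpace F] {Z : ℤ → Ω → E}

lemma tendsto_avg_backward_ae (hind : iIndepFun Z μ) (hid : ∀ t, IdentDistrib (Z t) (Z 0) μ μ)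
    {f : E → ℝ} (hf : Measurable f) (hint : Integrable (fun ω => f (Z 0 ω)) μ) (t : ℤ) :
    ∀ᵐ ω ∂μ, Tendsto (fun n : ℕ => (∑ i ∈ range n, f (Z (t - i) ω)) / n) atTop
      (𝓝 (∫ ω, f (Z 0 ω) ∂μ)) := by
  have hidf : ∀ s, IdentDistrib (fun ω => f (Z s ω)) (fun ω => f (Z 0 ω)) μ μ :=
    fun s => (hid s).comp hf
  have hslln := strong_law_ae_real (fun (i : ℕ) ω => f (Z (t - i) ω))
    ((hidf _).integrable_iff.2 hint)
    (fun i j hij => (hind.indepFun (by omega)).comp hf hf)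
    (fun i => (hidf _).trans (hidf _).symm)
  rwa [(hidf _).integral_eq] at hslln

lemma identDistrib_shift (hind : iIndepFun Z μ) (hid : ∀ t, IdentDistrib (Z t) (Z 0) μ μ)
    (t : ℤ) : IdentDistrib (fun ω s => Z (t + s) ω) (fun ω s => Z s ω) μ μ :=
  IdentDistrib.pi (fun s => (hid _).trans (hid s).symm) (hind.precomp (add_right_injective t)) hind

lemma map_fin_eq_of_eq_comp_shift (hind : iIndepFun Z μ)
    (hid : ∀ t, IdentDistrib (Z t) (Z 0) μ μ) {Φ : (ℤ → E) → F} (hΦ : Measurable Φ)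
    {X : ℤ → Ω → F} (hX : ∀ t ω, X t ω = Φ fun s => Z (t + s) ω) (t : ℤ) (n : ℕ) :
    Measure.map (fun ω => fun i : Fin n => X (t + i) ω) μ
      = Measure.map (fun ω => fun i : Fin n => X (i : ℤ) ω) μ := by
  have hΨ : Measurable fun (z : ℤ → E) (i : Fin n) => Φ fun s => z (i + s) :=
    measurable_pi_lambda _ fun i => hΦ.comp (measurable_pi_lambda _ fun s => measurable_pi_apply _)
  convert ((identDistrib_shift hind hid t).comp hΨ).map_eq using 2 <;>
    funext ω i <;> simp [hX, add_assoc]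

lemma identDistrib_of_map_fin_eq {X : ℤ → Ω → E} (hX : ∀ t, Measurable (X t))
    (hstat : ∀ (t : ℤ) (n : ℕ), Measure.map (fun ω => fun i : Fin n => X (t + i) ω) μ
      = Measure.map (fun ω => fun i : Fin n => X (i : ℤ) ω) μ) (t : ℤ) :
    IdentDistrib (X t) (X 0) μ μ := by
  have hpair : IdentDistrib (fun ω (i : Fin 1) => X (t + i) ω) (fun ω (i : Fin 1) => X i ω) μ μ :=
    ⟨(measurable_pi_lambda _ fun _ => hX _).aemeasurable,
      (measurable_pi_lambda _ fun _ => hX _).aemeasurable, hstat t 1⟩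
  simpa [Function.comp_def] using hpair.comp (measurable_pi_apply 0)

end

section

variable {Ω : Type*} {A B : ℤ → Ω → ℝ}

lemma measurable_tsum_prod_mul_comap (t : ℤ) :
    Measurable[MeasurableSpace.comap
        (fun ω => fun s : {s : ℤ // s ≤ t} => (A s.1 ω, B s.1 ω)) inferInstance]
      (fun ω => ∑' k : ℕ, (∏ j ∈ range k, A (t - j) ω) * B (t - k) ω) := by
  set past := MeasurableSpace.comap
    (fun ω => fun s : {s : ℤ // s ≤ t} => (A s.1 ω, B s.1 ω)) inferInstance
  have hbase : Measurable[past] fun ω => fun s : {s : ℤ // s ≤ t} => (A s.1 ω, B s.1 ω) :=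
    comap_measurable _
  have hpast (s : ℤ) (hs : s ≤ t) : Measurable[past] fun ω => (A s ω, B s ω) :=
    (measurable_pi_apply (⟨s, hs⟩ : {s : ℤ // s ≤ t})).comp hbase
  exact Measurable.tsum fun k => (measurable_prod _ fun j _ => (hpast _ (by omega)).fst).mul
    (hpast _ (by omega)).snd

variable [MeasurableSpace Ω] {μ : Measure Ω}

lemma ae_summable_and_tendsto_prod [IsFiniteMeasure μ]
    (hAnonneg : ∀ t ω, 0 ≤ A t ω) (hBnonneg : ∀ t ω, 0 ≤ B t ω)
    (hiid : iIndepFun (fun t ω => (A t ω, B t ω)) μ)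
    (hid : ∀ t, IdentDistrib (fun ω => (A t ω, B t ω)) (fun ω => (A 0 ω, B 0 ω)) μ μ)
    (hlogA : Integrable (fun ω => max (Real.log (A 0 ω)) 0) μ)
    (hlogB : Integrable (fun ω => max (Real.log (B 0 ω)) 0) μ)
    (hneg : ¬ Integrable (fun ω => Real.log (A 0 ω)) μ ∨ ∫ ω, Real.log (A 0 ω) ∂μ < 0) (t : ℤ) :
    ∀ᵐ ω ∂μ, Summable (fun k : ℕ => (∏ j ∈ range k, A (t - j) ω) * B (t - k) ω) ∧
      Tendsto (fun n : ℕ => ∏ j ∈ range n, A (t - j) ω) atTop (𝓝 0) := by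
  obtain ⟨M, hMint, hMneg⟩ := exists_integral_max_neg_lt_zero
    (Real.measurable_log.comp_aemeasurable (hid 0).aemeasurable_snd.fst).aestronglyMeasurable
    hlogA hneg
  have hx := tendsto_avg_backward_ae hiid hid (f := fun p => max (Real.log p.1) (-M))
    (by fun_prop) hMint t
  have hℓ := tendsto_avg_backward_ae hiid hid (f := fun p => max (Real.log p.2) 0)
    (by fun_prop) hlogB t
  have hexp (y r : ℝ) : y ≤ Real.exp (max (Real.log y) r) :=
    (Real.le_exp_log y).trans (Real.exp_le_exp.2 (le_max_left _ _))
  filter_upwards [hx, hℓ] with ω hxω hℓω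
  exact ⟨summable_prod_mul_of_tendsto_avg hMneg (fun _ => hAnonneg _ ω) (fun _ => hBnonneg _ ω)
      (fun _ => hexp _ _) (fun _ => hexp _ _) hxω hℓω,
    tendsto_prod_of_tendsto_avg hMneg (fun _ => hAnonneg _ ω) (fun _ => hexp _ _) hxω⟩

lemma ae_eq_of_eq_mul_add [IsFiniteMeasure μ] (hAmeas : ∀ t, Measurable (A t))
    (hBmeas : ∀ t, Measurable (B t)) {Y' : ℤ → Ω → ℝ}
    (hrec : ∀ t, ∀ᵐ ω ∂μ, Y' t ω = A t ω * Y' (t - 1) ω + B t ω)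
    (hid : ∀ t, IdentDistrib (Y' t) (Y' 0) μ μ) {t : ℤ} {y : Ω → ℝ}
    (hprod : ∀ᵐ ω ∂μ, Tendsto (fun n : ℕ => ∏ j ∈ range n, A (t - j) ω) atTop (𝓝 0))
    (hsum : ∀ᵐ ω ∂μ, HasSum (fun k : ℕ => (∏ j ∈ range k, A (t - j) ω) * B (t - k) ω) (y ω)) :
    Y' t =ᵐ[μ] y := by
  set S : ℕ → Ω → ℝ := fun n ω => ∑ k ∈ range n, (∏ j ∈ range k, A (t - j) ω) * B (t - k) ω
  have hP : TendstoInMeasure μ (fun n ω => ∏ j ∈ range n, A (t - j) ω) atTop 0 :=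
    tendstoInMeasure_of_tendsto_ae (fun n => by fun_prop) hprod
  have hremainder : TendstoInMeasure μ (fun n ω => Y' t ω - S n ω) atTop 0 := by
    refine (tendstoInMeasure_mul_of_identDistrib hP fun n => hid (t - n)).congr_left
      fun n => ?_
    filter_upwards [ae_all_iff.2 hrec] with ω hω
    rw [eq_sum_add_prod_mul_of_forall_eq hω t n]
    ring
  have hlimit : TendstoInMeasure μ (fun n ω => Y' t ω - S n ω) atTop (fun ω => Y' t ω - y ω) :=
    tendstoInMeasure_of_tendsto_ae (fun n => (hid t).aemeasurable_fst.aestronglyMeasurable.sub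
      (by fun_prop))
      (by filter_upwards [hsum] with ω hω using tendsto_const_nhds.sub hω.tendsto_sum_nat)
  filter_upwards [tendstoInMeasure_ae_unique hlimit hremainder] with ω hω
  exact sub_eq_zero.1 hω

end

/-- Brandt/Vervaat: for iid pairs `(A_t, B_t)` of nonnegative random variables with
`E[log⁺ A₀] < ∞`, `E[log⁺ B₀] < ∞` and `E[log A₀] < 0`, the series
`Y_t = Σ_{k≥0} A_t ⋯ A_{t−k+1} B_{t−k}` converges a.s. and defines the unique
strictly stationary causal solution of `Y_t = A_t Y_{t−1} + B_t`. -/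
theorem stmt9 {Ω : Type*} [MeasurableSpace Ω] (μ : Measure Ω) [IsProbabilityMeasure μ]
    (A B : ℤ → Ω → ℝ)
    (hAmeas : ∀ t, Measurable (A t)) (hBmeas : ∀ t, Measurable (B t))
    (hAnonneg : ∀ t ω, 0 ≤ A t ω) (hBnonneg : ∀ t ω, 0 ≤ B t ω)
    (hiid : iIndepFun (fun t ω => (A t ω, B t ω)) μ)
    (hident : ∀ t, Measure.map (fun ω => (A t ω, B t ω)) μ
        = Measure.map (fun ω => (A 0 ω, B 0 ω)) μ)
    (hlogA : Integrable (fun ω => max (Real.log (A 0 ω)) 0) μ)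
    (hlogB : Integrable (fun ω => max (Real.log (B 0 ω)) 0) μ)
    (hneg : ¬ Integrable (fun ω => Real.log (A 0 ω)) μ ∨
        ∫ ω, Real.log (A 0 ω) ∂μ < 0)
    (Y : ℤ → Ω → ℝ)
    (hY : ∀ t ω, Y t ω =
      ∑' k : ℕ, (∏ j ∈ Finset.range k, A (t - j) ω) * B (t - k) ω) :
    -- a.s. convergence of the series
    (∀ t : ℤ, ∀ᵐ ω ∂μ, Summable
      (fun k : ℕ => (∏ j ∈ Finset.range k, A (t - j) ω) * B (t - k) ω)) ∧
    -- `Y` solves the stochastic recurrence equation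
    (∀ t : ℤ, ∀ᵐ ω ∂μ, Y t ω = A t ω * Y (t - 1) ω + B t ω) ∧
    -- strict stationarity
    (∀ (t : ℤ) (n : ℕ),
      Measure.map (fun ω => fun i : Fin n => Y (t + i) ω) μ
        = Measure.map (fun ω => fun i : Fin n => Y (i : ℤ) ω) μ) ∧
    -- causality
    (∀ t : ℤ, Measurable[MeasurableSpace.comap
        (fun ω => fun s : {s : ℤ // s ≤ t} => (A s.1 ω, B s.1 ω)) inferInstance]
      (Y t)) ∧
    -- uniqueness among strictly stationary causal solutions
    (∀ Y' : ℤ → Ω → ℝ, (∀ t, Measurable (Y' t)) →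
      (∀ t : ℤ, Measurable[MeasurableSpace.comap
          (fun ω => fun s : {s : ℤ // s ≤ t} => (A s.1 ω, B s.1 ω)) inferInstance]
        (Y' t)) →
      (∀ t : ℤ, ∀ᵐ ω ∂μ, Y' t ω = A t ω * Y' (t - 1) ω + B t ω) →
      (∀ (t : ℤ) (n : ℕ),
        Measure.map (fun ω => fun i : Fin n => Y' (t + i) ω) μ
          = Measure.map (fun ω => fun i : Fin n => Y' (i : ℤ) ω) μ) →
      ∀ t : ℤ, Y' t =ᵐ[μ] Y t) := by
  have hid : ∀ t, IdentDistrib (fun ω => (A t ω, B t ω)) (fun ω => (A 0 ω, B 0 ω)) μ μ :=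
    fun t => ⟨((hAmeas t).prodMk (hBmeas t)).aemeasurable,
      ((hAmeas 0).prodMk (hBmeas 0)).aemeasurable, hident t⟩
  have hae := ae_summable_and_tendsto_prod hAnonneg hBnonneg hiid hid hlogA hlogB hneg
  have hsum t := (hae t).mono fun _ h => h.1
  refine ⟨hsum, fun t => ?_, map_fin_eq_of_eq_comp_shift hiid hid
    (Φ := fun z => ∑' k : ℕ, (∏ j ∈ range k, (z (-j)).1) * (z (-k)).2) ?_ fun t ω => ?_,
    fun t => funext (hY t) ▸ measurable_tsum_prod_mul_comap t, ?_⟩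
  · filter_upwards [hsum t] with ω hω
    rw [hY, hY]
    exact tsum_prod_mul_eq_mul_tsum_add (a := (A · ω)) (b := (B · ω)) hω
  · exact Measurable.tsum fun k =>
      (measurable_prod _ fun j _ => (measurable_pi_apply _).fst).mul (measurable_pi_apply _).snd
  · simp only [hY, ← sub_eq_add_neg]
  · intro Y' hY'meas _ hY'rec hY'stat t
    exact ae_eq_of_eq_mul_add hAmeas hBmeas hY'rec (identDistrib_of_map_fin_eq hY'meas hY'stat)
      ((hae t).mono fun _ h => h.2) ((hsum t).mono fun ω h => hY t ω ▸ h.hasSum)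
end
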